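/- arXiv:1810.03233 — 5 statements merged into one kernel-verified Lean document; each statement's English description precedes it below -/
import Mathlib

section
/- Single-step primal-gap recursion for Frank–Wolfe with an inexact gradient direction: let x ∈ C, let d ∈ ℝ^d, let γ ∈ [0, 1], let v ∈ C satisfy ⟨d, v⟩ ≤ ⟨d, s⟩ for all s ∈ C, and set x⁺ = (1 − γ)x + γv. Then f(x⁺) − f(x*) ≤ (1 − γ)(f(x) − f(x*)) + γR·‖∇f(x) − d‖ + LR²γ²/2. -/
/-!
The descent lemma at `x` in the direction `γ • (v - x)` gives
`f x⁺ ≤ f x + γ ⟪∇f x, v - x⟫ + L γ² R² / 2`. Because `v` minimises `⟪d, ·⟫` over `C`, replacing `d`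
by `∇f x` costs at most `‖∇f x - d‖ ‖v - x*‖ ≤ R ‖∇f x - d‖`, so
`⟪∇f x, v - x⟫ ≤ ⟪∇f x, x* - x⟫ + R ‖∇f x - d‖`, and convexity bounds `⟪∇f x, x* - x⟫` by
`f x* - f x`.
-/

open scoped RealInnerProductSpace

open Set AffineMap

variable {F : Type*} [NormedAddCommGroup F] [InnerProductSpace ℝ F]

lemma inner_sub_le_of_inner_le {g d v s : F} (x : F) (hv : ⟪d, v⟫ ≤ ⟪d, s⟫) :
    ⟪g, v - x⟫ ≤ ⟪g, s - x⟫ + ‖g - d‖ * ‖v - s‖ := by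
  have hsplit : ⟪g, v - x⟫ - ⟪g, s - x⟫ = ⟪g - d, v - s⟫ + (⟪d, v⟫ - ⟪d, s⟫) := by
    simp only [inner_sub_left, inner_sub_right]; ring
  linarith [real_inner_le_norm (g - d) (v - s)]

variable [CompleteSpace F] {f : F → ℝ} {a b : F}

lemma hasDerivAt_comp_lineMap {t : ℝ} (hf : DifferentiableAt ℝ f (lineMap a b t)) :
    HasDerivAt (fun s ↦ f (lineMap a b s)) ⟪gradient f (lineMap a b t), b - a⟫ t :=
  hf.hasGradientAt.hasFDerivAt.comp_hasDerivAt t hasDerivAt_lineMap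

lemma ConvexOn.add_inner_gradient_le (hf : ConvexOn ℝ univ f) (hfa : DifferentiableAt ℝ f a)
    (b : F) : f a + ⟪gradient f a, b - a⟫ ≤ f b := by
  have hline : ConvexOn ℝ univ (fun t ↦ f (lineMap a b t)) :=
    hf.comp_affineMap (lineMap a b)
  have hderiv := hasDerivAt_comp_lineMap (t := 0) (b := b) (by rwa [lineMap_apply_zero])
  have := hline.le_slope_of_hasDerivAt (mem_univ 0) (mem_univ 1) zero_lt_one hderiv
  simp only [slope_def_field, lineMap_apply_zero, lineMap_apply_one, sub_zero, div_one] at this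
  linarith

lemma le_add_inner_gradient_add_norm_sq (hf : Differentiable ℝ f) {L : ℝ}
    (hlip : ∀ u w, ‖gradient f u - gradient f w‖ ≤ L * ‖u - w‖) (a b : F) :
    f b ≤ f a + ⟪gradient f a, b - a⟫ + L / 2 * ‖b - a‖ ^ 2 := by
  -- `φ` is antitone on `[0, ∞)`: by Cauchy–Schwarz and the Lipschitz bound its derivative is `≤ 0`.
  set φ : ℝ → ℝ := fun t ↦
    f (lineMap a b t) - t * ⟪gradient f a, b - a⟫ - L / 2 * t ^ 2 * ‖b - a‖ ^ 2
  have hφ (t : ℝ) : HasDerivAt φ (⟪gradient f (lineMap a b t) - gradient f a, b - a⟫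
      - L * t * ‖b - a‖ ^ 2) t := by
    refine (((hasDerivAt_comp_lineMap (hf _)).sub
      ((hasDerivAt_id t).mul_const ⟪gradient f a, b - a⟫)).sub
      (((hasDerivAt_pow 2 t).const_mul (L / 2)).mul_const (‖b - a‖ ^ 2))).congr_deriv ?_
    rw [inner_sub_left]; push_cast; ring
  have hφ_nonpos : ∀ t ∈ interior (Ici (0 : ℝ)),
      ⟪gradient f (lineMap a b t) - gradient f a, b - a⟫ - L * t * ‖b - a‖ ^ 2 ≤ 0 := by
    intro t ht
    rw [interior_Ici, mem_Ioi] at ht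
    have hdist : ‖lineMap a b t - a‖ = t * ‖b - a‖ := by
      rw [lineMap_apply_module', add_sub_cancel_right, norm_smul, Real.norm_of_nonneg ht.le]
    rw [sub_nonpos]
    calc ⟪gradient f (lineMap a b t) - gradient f a, b - a⟫
        ≤ ‖gradient f (lineMap a b t) - gradient f a‖ * ‖b - a‖ := real_inner_le_norm _ _
      _ ≤ L * ‖lineMap a b t - a‖ * ‖b - a‖ := by gcongr; exact hlip _ _
      _ = L * t * ‖b - a‖ ^ 2 := by rw [hdist]; ring
  have hanti : AntitoneOn φ (Ici 0) :=
    antitoneOn_of_hasDerivWithinAt_nonpos (convex_Ici 0)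
      (fun t _ ↦ (hφ t).continuousAt.continuousWithinAt)
      (fun t _ ↦ (hφ t).hasDerivWithinAt) hφ_nonpos
  have := hanti (mem_Ici.2 le_rfl) (mem_Ici.2 zero_le_one) zero_le_one
  simp only [φ, lineMap_apply_zero, lineMap_apply_one] at this
  linarith

theorem frank_wolfe_single_step_primal_gap_general
    (d : ℕ)
    (C : Set (EuclideanSpace ℝ (Fin d)))
    (R : ℝ) (hdiam : ∀ u ∈ C, ∀ w ∈ C, ‖u - w‖ ≤ R)
    (f : EuclideanSpace ℝ (Fin d) → ℝ)
    (hfconv : ConvexOn ℝ Set.univ f)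
    (hfdiff : Differentiable ℝ f)
    (L : ℝ) (hL : 0 < L)
    (hflip : ∀ u w, ‖gradient f u - gradient f w‖ ≤ L * ‖u - w‖)
    (xstar : EuclideanSpace ℝ (Fin d)) (hxstarC : xstar ∈ C)
    (x : EuclideanSpace ℝ (Fin d)) (hx : x ∈ C)
    (dvec : EuclideanSpace ℝ (Fin d))
    (γ : ℝ) (hγ0 : 0 ≤ γ)
    (v : EuclideanSpace ℝ (Fin d)) (hvC : v ∈ C)
    (hvmin : ∀ s ∈ C, ⟪dvec, v⟫ ≤ ⟪dvec, s⟫) :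
    f ((1 - γ) • x + γ • v) - f xstar ≤
      (1 - γ) * (f x - f xstar) + γ * R * ‖gradient f x - dvec‖ +
        L * R ^ 2 * γ ^ 2 / 2 := by
  set g := gradient f x
  have hstep : (1 - γ) • x + γ • v - x = γ • (v - x) := by module
  have hdescent := le_add_inner_gradient_add_norm_sq hfdiff hflip x ((1 - γ) • x + γ • v)
  rw [hstep, inner_smul_right, norm_smul, Real.norm_of_nonneg hγ0] at hdescent
  have hlinear : ⟪g, v - x⟫ ≤ f xstar - f x + ‖g - dvec‖ * R :=
    calc ⟪g, v - x⟫ ≤ ⟪g, xstar - x⟫ + ‖g - dvec‖ * ‖v - xstar‖ :=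
          inner_sub_le_of_inner_le x (hvmin xstar hxstarC)
      _ ≤ f xstar - f x + ‖g - dvec‖ * R := by
          gcongr
          · linarith [hfconv.add_inner_gradient_le (hfdiff x) xstar]
          · exact hdiam v hvC xstar hxstarC
  have hquadratic : ‖v - x‖ ^ 2 ≤ R ^ 2 :=
    pow_le_pow_left₀ (norm_nonneg _) (hdiam v hvC x hx) 2
  linarith [mul_le_mul_of_nonneg_left hlinear hγ0,
    mul_le_mul_of_nonneg_left hquadratic (mul_nonneg hL.le (sq_nonneg γ))]

theorem frank_wolfe_single_step_primal_gap
    (d : ℕ) (hd : 1 ≤ d)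
    (C : Set (EuclideanSpace ℝ (Fin d)))
    (hCne : C.Nonempty) (hCcomp : IsCompact C) (hCconv : Convex ℝ C)
    (R : ℝ) (hR : 0 < R) (hdiam : ∀ u ∈ C, ∀ w ∈ C, ‖u - w‖ ≤ R)
    (f : EuclideanSpace ℝ (Fin d) → ℝ)
    (hfconv : ConvexOn ℝ Set.univ f)
    (hfdiff : Differentiable ℝ f)
    (L : ℝ) (hL : 0 < L)
    (hflip : ∀ u w, ‖gradient f u - gradient f w‖ ≤ L * ‖u - w‖)
    (xstar : EuclideanSpace ℝ (Fin d)) (hxstarC : xstar ∈ C)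
    (hxstar : ∀ u ∈ C, f xstar ≤ f u)
    (x : EuclideanSpace ℝ (Fin d)) (hx : x ∈ C)
    (dvec : EuclideanSpace ℝ (Fin d))
    (γ : ℝ) (hγ0 : 0 ≤ γ) (hγ1 : γ ≤ 1)
    (v : EuclideanSpace ℝ (Fin d)) (hvC : v ∈ C)
    (hvmin : ∀ s ∈ C, ⟪dvec, v⟫ ≤ ⟪dvec, s⟫) :
    f ((1 - γ) • x + γ • v) - f xstar ≤
      (1 - γ) * (f x - f xstar) + γ * R * ‖gradient f x - dvec‖ +
        L * R ^ 2 * γ ^ 2 / 2 :=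
  frank_wolfe_single_step_primal_gap_general d C R hdiam f hfconv hfdiff L hL hflip xstar hxstarC x
    hx dvec γ hγ0 v hvC hvmin
end

section
/- Bias of the Kiefer–Wolfowitz gradient estimate: if F : ℝ^d → ℝ is differentiable with L-Lipschitz gradient and c > 0, then for every x ∈ ℝ^d, ‖g_c(F)(x) − ∇F(x)‖ ≤ (cL/2)·√d. -/
open scoped RealInnerProductSpace BigOperators

/-!
The `i`-th coordinate of `kwsa d F c x - ∇F x` is `(F (x + c e_i) - F x - c ⟪∇F x, e_i⟫) / c`,
a first-order Taylor remainder divided by `c`. Along the segment `t ↦ x + t v` the remainder has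
derivative `(F' (x + t v) - F' x) v`, of norm at most `L t ‖v‖²` when `F'` is `L`-Lipschitz, so
comparison with `t ↦ L t² ‖v‖² / 2` bounds it by `L c² / 2`. Every coordinate is thus at most
`c L / 2`, and the Euclidean norm at most `c L / 2 · √d`.
-/

/-- The KWSA (Kiefer–Wolfowitz) gradient estimate of `F` at `x` with smoothing
parameter `c`: `g_c(F)(x) = ∑ i, ((F(x + c·e_i) − F(x))/c)·e_i`. -/
noncomputable def kwsa (d : ℕ) (F : EuclideanSpace ℝ (Fin d) → ℝ) (c : ℝ)
    (x : EuclideanSpace ℝ (Fin d)) : EuclideanSpace ℝ (Fin d) :=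
  ∑ i : Fin d, ((F (x + c • EuclideanSpace.single i (1 : ℝ)) - F x) / c) •
    EuclideanSpace.single i (1 : ℝ)

theorem norm_image_add_sub_sub_fderiv_le {E G : Type*} [NormedAddCommGroup E]
    [NormedSpace ℝ E] [NormedAddCommGroup G] [NormedSpace ℝ G] {f : E → G} (hf : Differentiable ℝ f) {L : ℝ}
    (hf' : ∀ u w, ‖fderiv ℝ f u - fderiv ℝ f w‖ ≤ L * ‖u - w‖) (u v : E) :
    ‖f (u + v) - f u - fderiv ℝ f u v‖ ≤ L / 2 * ‖v‖ ^ 2 := by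
  set φ : ℝ → G := fun t => f (u + t • v) - f u - t • fderiv ℝ f u v
  have hφ : ∀ t, HasDerivAt φ (fderiv ℝ f (u + t • v) v - fderiv ℝ f u v) t := by
    intro t
    have hline : HasDerivAt (fun s : ℝ => u + s • v) v t := by
      simpa using ((hasDerivAt_id t).smul_const v).const_add u
    have hlin : HasDerivAt (fun s : ℝ => s • fderiv ℝ f u v) (fderiv ℝ f u v) t := by
      simpa using (hasDerivAt_id t).smul_const (fderiv ℝ f u v)
    exact (((hf _).hasFDerivAt.comp_hasDerivAt t hline).sub_const (f u)).sub hlin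
  have hφ' : ∀ t ∈ Set.Ico (0 : ℝ) 1,
      ‖fderiv ℝ f (u + t • v) v - fderiv ℝ f u v‖ ≤ L * ‖v‖ ^ 2 * t := by
    rintro t ⟨ht, -⟩
    calc ‖fderiv ℝ f (u + t • v) v - fderiv ℝ f u v‖
        ≤ ‖fderiv ℝ f (u + t • v) - fderiv ℝ f u‖ * ‖v‖ := by
          rw [← sub_apply]; exact ContinuousLinearMap.le_opNorm _ _
      _ ≤ L * ‖t • v‖ * ‖v‖ := by
          gcongr; simpa using hf' (u + t • v) u
      _ = L * ‖v‖ ^ 2 * t := by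
          rw [norm_smul, Real.norm_of_nonneg ht]; ring
  have hB : ∀ t : ℝ, HasDerivAt (fun s => L / 2 * ‖v‖ ^ 2 * s ^ 2) (L * ‖v‖ ^ 2 * t) t :=
    fun t => ((hasDerivAt_pow 2 t).const_mul (L / 2 * ‖v‖ ^ 2)).congr_deriv (by ring)
  have hφ1 := image_norm_le_of_norm_deriv_right_le_deriv_boundary
    (fun t _ => (hφ t).continuousAt.continuousWithinAt)
    (fun t _ => (hφ t).hasDerivWithinAt) (by simp [φ]) hB hφ' (Set.right_mem_Icc.2 zero_le_one)
  simpa [φ] using hφ1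

theorem abs_image_add_sub_sub_inner_gradient_le {E : Type*} [NormedAddCommGroup E]
    [InnerProductSpace ℝ E] [CompleteSpace E] {f : E → ℝ} (hf : Differentiable ℝ f) {L : ℝ}
    (hf' : ∀ u w, ‖gradient f u - gradient f w‖ ≤ L * ‖u - w‖) (u v : E) :
    |f (u + v) - f u - ⟪gradient f u, v⟫| ≤ L / 2 * ‖v‖ ^ 2 := by
  have hfderiv : ∀ u w, ‖fderiv ℝ f u - fderiv ℝ f w‖ ≤ L * ‖u - w‖ := by
    intro u w
    rw [← toDual_gradient, ← toDual_gradient, ← map_sub, LinearIsometryEquiv.norm_map]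
    exact hf' u w
  have h := norm_image_add_sub_sub_fderiv_le hf hfderiv u v
  rwa [← toDual_gradient, InnerProductSpace.toDual_apply_apply, Real.norm_eq_abs] at h

theorem EuclideanSpace.norm_le_mul_sqrt_card {ι : Type*} [Fintype ι] (w : EuclideanSpace ℝ ι)
    {b : ℝ} (hw : ∀ i, |w i| ≤ b) : ‖w‖ ≤ b * √(Fintype.card ι) := by
  rcases isEmpty_or_nonempty ι with hι | ⟨⟨i⟩⟩
  · simp [Subsingleton.elim w 0]
  have hb : 0 ≤ b := (abs_nonneg _).trans (hw i)
  rw [EuclideanSpace.norm_eq, ← Real.sqrt_sq hb, ← Real.sqrt_mul (sq_nonneg b)]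
  gcongr
  calc ∑ i, ‖w i‖ ^ 2 ≤ ∑ _i : ι, b ^ 2 := by
        gcongr with i; exact hw i
    _ = b ^ 2 * Fintype.card ι := by simp [mul_comm]

theorem kwsa_apply (d : ℕ) (F : EuclideanSpace ℝ (Fin d) → ℝ) (c : ℝ)
    (x : EuclideanSpace ℝ (Fin d)) (i : Fin d) :
    kwsa d F c x i = (F (x + c • EuclideanSpace.single i 1) - F x) / c := by
  simp [kwsa, Pi.single_apply]

theorem kwsa_bias_general
    (d : ℕ)
    (F : EuclideanSpace ℝ (Fin d) → ℝ)
    (hFdiff : Differentiable ℝ F)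
    (L : ℝ)
    (hFlip : ∀ u w, ‖gradient F u - gradient F w‖ ≤ L * ‖u - w‖)
    (c : ℝ) (hc : 0 < c)
    (x : EuclideanSpace ℝ (Fin d)) :
    ‖kwsa d F c x - gradient F x‖ ≤ (c * L / 2) * Real.sqrt d := by
  have hcoord : ∀ i, |(kwsa d F c x - gradient F x) i| ≤ c * L / 2 := by
    intro i
    have htaylor := abs_image_add_sub_sub_inner_gradient_le hFdiff hFlip x
      (c • EuclideanSpace.single i 1)
    rw [inner_smul_right, EuclideanSpace.inner_single_right, norm_smul, PiLp.norm_single,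
      Real.norm_of_nonneg hc.le] at htaylor
    calc |(kwsa d F c x - gradient F x) i|
        = |F (x + c • EuclideanSpace.single i 1) - F x - c * gradient F x i| / c := by
          rw [PiLp.sub_apply, kwsa_apply, div_sub' hc.ne', abs_div, abs_of_pos hc]
      _ ≤ L / 2 * c ^ 2 / c := by gcongr; simpa using htaylor
      _ = c * L / 2 := by field_simp
  simpa using EuclideanSpace.norm_le_mul_sqrt_card _ hcoord

theorem kwsa_bias
    (d : ℕ) (hd : 1 ≤ d)
    (F : EuclideanSpace ℝ (Fin d) → ℝ)
    (hFdiff : Differentiable ℝ F)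
    (L : ℝ) (hL : 0 < L)
    (hFlip : ∀ u w, ‖gradient F u - gradient F w‖ ≤ L * ‖u - w‖)
    (c : ℝ) (hc : 0 < c)
    (x : EuclideanSpace ℝ (Fin d)) :
    ‖kwsa d F c x - gradient F x‖ ≤ (c * L / 2) * Real.sqrt d :=
  kwsa_bias_general d F hFdiff L hFlip c hc x
end

section
/- Induction lemma for the primal-gap sequence: let Q' > 0 and let a : ℕ → ℝ satisfy a(0) ≤ Q'/9^{1/3} and a(t+1) ≤ (1 − 2/(t+9))·a(t) + Q'/(t+9)^{4/3} for all t ≥ 0. Then a(t) ≤ Q'/(t+9)^{1/3} for all t ≥ 0. -/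
theorem primal_gap_induction
    (Q' : ℝ) (hQ' : 0 < Q')
    (a : ℕ → ℝ)
    (h0 : a 0 ≤ Q' / (9 : ℝ) ^ ((1 : ℝ) / 3))
    (hrec : ∀ t : ℕ, a (t + 1) ≤
      (1 - 2 / ((t : ℝ) + 9)) * a t + Q' / ((t : ℝ) + 9) ^ ((4 : ℝ) / 3)) :
    ∀ t : ℕ, a t ≤ Q' / ((t : ℝ) + 9) ^ ((1 : ℝ) / 3) := by
  intro t
  induction t with
  | zero => simpa using h0
  | succ t ih =>
    set x : ℝ := (t : ℝ) + 9 with hxdef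
    have hx9 : (9 : ℝ) ≤ x := by
      have : (0:ℝ) ≤ (t:ℝ) := Nat.cast_nonneg t
      simp [hxdef]
    have hx0 : (0:ℝ) < x := by linarith
    have hx10 : (0:ℝ) < x + 1 := by linarith
    have hv : (0:ℝ) < x ^ ((1:ℝ)/3) := Real.rpow_pos_of_pos hx0 _
    have hu : (0:ℝ) < (x+1) ^ ((1:ℝ)/3) := Real.rpow_pos_of_pos hx10 _
    have hv3 : (x ^ ((1:ℝ)/3))^(3:ℕ) = x := by
      rw [← Real.rpow_natCast (x ^ ((1:ℝ)/3)) 3, ← Real.rpow_mul hx0.le]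
      norm_num
    have hu3 : ((x+1) ^ ((1:ℝ)/3))^(3:ℕ) = x + 1 := by
      rw [← Real.rpow_natCast ((x+1) ^ ((1:ℝ)/3)) 3, ← Real.rpow_mul hx10.le]
      norm_num
    have h43 : x ^ ((4:ℝ)/3) = x * x ^ ((1:ℝ)/3) := by
      rw [show (4:ℝ)/3 = 1 + 1/3 by norm_num, Real.rpow_add hx0, Real.rpow_one]
    -- key : (x-1) * (x+1)^(1/3) ≤ x * x^(1/3)
    have key : (x - 1) * (x+1) ^ ((1:ℝ)/3) ≤ x * x ^ ((1:ℝ)/3) := by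
      have hcube : ((x - 1) * (x+1) ^ ((1:ℝ)/3))^(3:ℕ) ≤ (x * x ^ ((1:ℝ)/3))^(3:ℕ) := by
        rw [mul_pow, mul_pow, hv3, hu3]
        nlinarith [hx9, sq_nonneg x, sq_nonneg (x-1), mul_pos hx0 hx0, mul_le_mul_of_nonneg_left hx9 hx0.le]
      exact le_of_pow_le_pow_left₀ (by norm_num) (by positivity) hcube
    have step : (1 - 2/x) * (Q' / x ^ ((1:ℝ)/3)) + Q' / x ^ ((4:ℝ)/3)
        ≤ Q' / (x+1) ^ ((1:ℝ)/3) := by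
      rw [h43]
      have h1 : (1 - 2/x) * (Q' / x ^ ((1:ℝ)/3)) + Q' / (x * x ^ ((1:ℝ)/3))
          = Q' * (x - 1) / (x * x ^ ((1:ℝ)/3)) := by
        field_simp
        ring
      rw [h1, div_le_div_iff₀ (by positivity) hu]
      nlinarith [mul_le_mul_of_nonneg_left key hQ'.le]
    have hmono : (1 - 2/x) * a t ≤ (1 - 2/x) * (Q' / x ^ ((1:ℝ)/3)) := by
      apply mul_le_mul_of_nonneg_left ih
      have : 2/x ≤ 2/9 := by
        apply div_le_div_of_nonneg_left (by norm_num) (by norm_num) hx9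
      linarith
    have hcast : ((t + 1 : ℕ) : ℝ) + 9 = x + 1 := by push_cast [hxdef]; ring
    rw [hcast]
    calc a (t+1) ≤ (1 - 2/x) * a t + Q' / x ^ ((4:ℝ)/3) := hrec t
      _ ≤ (1 - 2/x) * (Q' / x ^ ((1:ℝ)/3)) + Q' / x ^ ((4:ℝ)/3) := by linarith
      _ ≤ Q' / (x+1) ^ ((1:ℝ)/3) := step
end

section
/- Bias of the random-directions (RDSA) gradient estimate: let f : ℝ^d → ℝ be differentiable with L-Lipschitz gradient, let c > 0, and let μ be a Borel probability measure on ℝ^d with ∫ ⟨z, u⟩·z dμ(z) = u for every u ∈ ℝ^d and ∫ ‖z‖³ dμ(z) < ∞. Then for every x ∈ ℝ^d, ‖ ∫ ((f(x + c·z) − f(x))/c)·z dμ(z) − ∇f(x) ‖ ≤ (cL/2)·∫ ‖z‖³ dμ(z). -/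
/-!
By the descent lemma `|f (x + v) - f x - ⟪∇f x, v⟫| ≤ L / 2 * ‖v‖ ^ 2`, the difference quotient
`(f (x + c • z) - f x) / c` differs from `⟪z, ∇f x⟫` by at most `c * L / 2 * ‖z‖ ^ 2`.
Since `∫ ⟪z, ∇f x⟫ • z ∂μ = ∇f x`, the bias is the integral of this error times `z`, whose norm
is at most `c * L / 2 * ‖z‖ ^ 3`.
-/

open MeasureTheory InnerProductSpace Set
open scoped RealInnerProductSpace

section Taylor

variable {E F : Type*} [NormedAddCommGroup E] [NormedSpace ℝ E]
  [NormedAddCommGroup F] [NormedSpace ℝ F]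

theorem norm_sub_sub_fderiv_le_of_lipschitz_fderiv {f : E → F} (hf : Differentiable ℝ f) {L : ℝ}
    (hlip : ∀ u w, ‖fderiv ℝ f u - fderiv ℝ f w‖ ≤ L * ‖u - w‖) (x v : E) :
    ‖f (x + v) - f x - fderiv ℝ f x v‖ ≤ L / 2 * ‖v‖ ^ 2 := by
  set φ : ℝ → F := fun t => f (x + t • v) - f x - t • fderiv ℝ f x v
  have hφ : ∀ t, HasDerivAt φ (fderiv ℝ f (x + t • v) v - fderiv ℝ f x v) t := fun t => by
    have hline : HasDerivAt (fun t : ℝ => x + t • v) v t := by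
      simpa using ((hasDerivAt_id t).smul_const v).const_add x
    convert (((hf _).hasFDerivAt.comp_hasDerivAt t hline).sub_const (f x)).sub
      ((hasDerivAt_id t).smul_const (fderiv ℝ f x v)) using 1
    · rfl
    · rw [one_smul]
  have hB : ∀ t, HasDerivAt (fun t : ℝ => L / 2 * ‖v‖ ^ 2 * t ^ 2) (L * ‖v‖ ^ 2 * t) t := fun t =>
    ((hasDerivAt_pow 2 t).const_mul (L / 2 * ‖v‖ ^ 2)).congr_deriv (by push_cast; ring)
  have bound : ∀ t ∈ Ico (0 : ℝ) 1,
      ‖fderiv ℝ f (x + t • v) v - fderiv ℝ f x v‖ ≤ L * ‖v‖ ^ 2 * t := fun t ht => by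
    rw [← ContinuousLinearMap.sub_apply']
    calc ‖(fderiv ℝ f (x + t • v) - fderiv ℝ f x) v‖
        ≤ ‖fderiv ℝ f (x + t • v) - fderiv ℝ f x‖ * ‖v‖ := ContinuousLinearMap.le_opNorm _ _
      _ ≤ L * ‖x + t • v - x‖ * ‖v‖ := by gcongr; exact hlip _ _
      _ = L * ‖v‖ ^ 2 * t := by
        rw [add_sub_cancel_left, norm_smul, Real.norm_of_nonneg ht.1]; ring
  have := image_norm_le_of_norm_deriv_right_le_deriv_boundary
    (fun t _ => (hφ t).continuousAt.continuousWithinAt) (fun t _ => (hφ t).hasDerivWithinAt)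
    (by simp [φ]) hB bound (right_mem_Icc.2 zero_le_one)
  simpa [φ] using this

end Taylor

section InnerProduct

variable {E : Type*} [NormedAddCommGroup E] [InnerProductSpace ℝ E]

theorem norm_integral_smul_self_sub_le [MeasurableSpace E] [OpensMeasurableSpace E]
    [SecondCountableTopology E] {μ : Measure E} {g : E → ℝ} (hg : AEStronglyMeasurable g μ)
    {G : E} {K : ℝ} (hmean : ∫ z, ⟪z, G⟫ • z ∂μ = G)
    (hM3 : Integrable (fun z => ‖z‖ ^ 3) μ) (hbound : ∀ z, |g z - ⟪z, G⟫| ≤ K * ‖z‖ ^ 2) :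
    ‖(∫ z, g z • z ∂μ) - G‖ ≤ K * ∫ z, ‖z‖ ^ 3 ∂μ := by
  -- A nonzero value of the integral in `hmean` already forces integrability.
  have hlin : Integrable (fun z => ⟪z, G⟫ • z) μ := by
    rcases eq_or_ne G 0 with rfl | hG
    · simp
    · exact .of_integral_ne_zero (by rwa [hmean])
  have hpt : ∀ z, ‖(g z - ⟪z, G⟫) • z‖ ≤ K * ‖z‖ ^ 3 := fun z => by
    rw [norm_smul, Real.norm_eq_abs]
    calc |g z - ⟪z, G⟫| * ‖z‖ ≤ K * ‖z‖ ^ 2 * ‖z‖ := by gcongr; exact hbound z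
      _ = K * ‖z‖ ^ 3 := by ring
  have hdev : Integrable (fun z => (g z - ⟪z, G⟫) • z) μ :=
    (hM3.const_mul K).mono' (by fun_prop) (ae_of_all _ hpt)
  have hgz : Integrable (fun z => g z • z) μ := by
    refine (hdev.add hlin).congr (ae_of_all _ fun z => ?_)
    simp only [Pi.add_apply, sub_smul, sub_add_cancel]
  calc ‖(∫ z, g z • z ∂μ) - G‖ = ‖∫ z, (g z - ⟪z, G⟫) • z ∂μ‖ := by
        simp_rw [sub_smul]; rw [integral_sub hgz hlin, hmean]
    _ ≤ ∫ z, K * ‖z‖ ^ 3 ∂μ := norm_integral_le_of_norm_le (hM3.const_mul K) (ae_of_all _ hpt)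
    _ = K * ∫ z, ‖z‖ ^ 3 ∂μ := integral_const_mul _ _

variable [CompleteSpace E]

theorem fderiv_eq_toDual_gradient (f : E → ℝ) (x : E) :
    fderiv ℝ f x = toDual ℝ E (gradient f x) :=
  ((toDual ℝ E).apply_symm_apply _).symm

theorem abs_sub_sub_inner_gradient_le {f : E → ℝ} (hf : Differentiable ℝ f) {L : ℝ}
    (hlip : ∀ u w, ‖gradient f u - gradient f w‖ ≤ L * ‖u - w‖) (x v : E) :
    |f (x + v) - f x - ⟪gradient f x, v⟫| ≤ L / 2 * ‖v‖ ^ 2 := by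
  have hlip' : ∀ u w, ‖fderiv ℝ f u - fderiv ℝ f w‖ ≤ L * ‖u - w‖ := fun u w => by
    rw [fderiv_eq_toDual_gradient, fderiv_eq_toDual_gradient, ← map_sub,
      LinearIsometryEquiv.norm_map]
    exact hlip u w
  have := norm_sub_sub_fderiv_le_of_lipschitz_fderiv hf hlip' x v
  rwa [fderiv_eq_toDual_gradient, toDual_apply_apply, Real.norm_eq_abs] at this

theorem abs_div_sub_inner_gradient_le {f : E → ℝ} (hf : Differentiable ℝ f) {L : ℝ}
    (hlip : ∀ u w, ‖gradient f u - gradient f w‖ ≤ L * ‖u - w‖) {c : ℝ} (hc : 0 < c) (x z : E) :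
    |(f (x + c • z) - f x) / c - ⟪z, gradient f x⟫| ≤ c * L / 2 * ‖z‖ ^ 2 := by
  have hquot : (f (x + c • z) - f x) / c - ⟪z, gradient f x⟫
      = (f (x + c • z) - f x - ⟪gradient f x, c • z⟫) / c := by
    rw [real_inner_smul_right, real_inner_comm]
    field_simp
  rw [hquot, abs_div, abs_of_pos hc, div_le_iff₀ hc]
  calc |f (x + c • z) - f x - ⟪gradient f x, c • z⟫| ≤ L / 2 * ‖c • z‖ ^ 2 :=
        abs_sub_sub_inner_gradient_le hf hlip x (c • z)
    _ = c * L / 2 * ‖z‖ ^ 2 * c := by rw [norm_smul, Real.norm_of_nonneg hc.le]; ring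

end InnerProduct

theorem rdsa_bias_general
    (d : ℕ)
    (f : EuclideanSpace ℝ (Fin d) → ℝ)
    (hfdiff : Differentiable ℝ f)
    (L : ℝ)
    (hflip : ∀ u w, ‖gradient f u - gradient f w‖ ≤ L * ‖u - w‖)
    (c : ℝ) (hc : 0 < c)
    (μ : Measure (EuclideanSpace ℝ (Fin d)))
    (hmean : ∀ u : EuclideanSpace ℝ (Fin d), (∫ z, ⟪z, u⟫ • z ∂μ) = u)
    (hM3 : Integrable (fun z : EuclideanSpace ℝ (Fin d) => ‖z‖ ^ 3) μ)
    (x : EuclideanSpace ℝ (Fin d)) :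
    ‖(∫ z, ((f (x + c • z) - f x) / c) • z ∂μ) - gradient f x‖ ≤
      (c * L / 2) * ∫ z, ‖z‖ ^ 3 ∂μ := by
  have hquot : Continuous fun z => (f (x + c • z) - f x) / c := by
    have := hfdiff.continuous
    fun_prop
  exact norm_integral_smul_self_sub_le hquot.aestronglyMeasurable (hmean _) hM3
    (abs_div_sub_inner_gradient_le hfdiff hflip hc x)

theorem rdsa_bias
    (d : ℕ) (hd : 1 ≤ d)
    (f : EuclideanSpace ℝ (Fin d) → ℝ)
    (hfdiff : Differentiable ℝ f)
    (L : ℝ) (hL : 0 < L)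
    (hflip : ∀ u w, ‖gradient f u - gradient f w‖ ≤ L * ‖u - w‖)
    (c : ℝ) (hc : 0 < c)
    (μ : Measure (EuclideanSpace ℝ (Fin d))) [IsProbabilityMeasure μ]
    (hmean : ∀ u : EuclideanSpace ℝ (Fin d), (∫ z, ⟪z, u⟫ • z ∂μ) = u)
    (hM3 : Integrable (fun z : EuclideanSpace ℝ (Fin d) => ‖z‖ ^ 3) μ)
    (x : EuclideanSpace ℝ (Fin d)) :
    ‖(∫ z, ((f (x + c • z) - f x) / c) • z ∂μ) - gradient f x‖ ≤
      (c * L / 2) * ∫ z, ‖z‖ ^ 3 ∂μ :=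
  rdsa_bias_general d f hfdiff L hflip c hc μ hmean hM3 x
end

section
/- Single-step descent with Frank–Wolfe gap for (possibly non-convex) smooth functions: let f : ℝ^d → ℝ be differentiable with L-Lipschitz gradient, let x ∈ C, d ∈ ℝ^d, γ ∈ [0, 1], let v ∈ C satisfy ⟨d, v⟩ ≤ ⟨d, s⟩ for all s ∈ C, and set x⁺ = (1 − γ)x + γv. Then f(x⁺) ≤ f(x) − γ·𝒢(x) + γR·‖∇f(x) − d‖ + LR²γ²/2, where 𝒢(x) = max_{u∈C} ⟨∇f(x), x − u⟩ is the Frank–Wolfe duality gap of f at x over C. -/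
/-!
Along the segment from `x` to `y = x + h`, the Lipschitz bound on `∇f` makes the slope of
`t ↦ f (x + t • h) - t ⟪∇f x, h⟫` at most `L t ‖h‖²`, which integrates to the descent lemma
`f y ≤ f x + ⟪∇f x, y - x⟫ + L/2 ‖y - x‖²`. For `y = x⁺` the quadratic term is at most
`L R² γ² / 2`, and the linear term `γ ⟪∇f x, v - x⟫` is compared with the gap: for every `u ∈ C`,
`⟪∇f x, v - u⟫ = ⟪∇f x - d, v - u⟫ + ⟪d, v - u⟫ ≤ R ‖∇f x - d‖`, since `v` minimises `⟪d, ·⟫` on `C`.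
-/

open scoped RealInnerProductSpace

section

variable {E : Type*} [NormedAddCommGroup E] [InnerProductSpace ℝ E]

theorem inner_sub_le_mul_norm_sub_of_inner_le {g d u v : E} {R : ℝ} (hvu : ‖v - u‖ ≤ R)
    (hmin : ⟪d, v⟫ ≤ ⟪d, u⟫) : ⟪g, v - u⟫ ≤ R * ‖g - d‖ := by
  have hd : ⟪d, v - u⟫ ≤ 0 := by rw [inner_sub_right]; linarith
  calc ⟪g, v - u⟫ = ⟪g - d, v - u⟫ + ⟪d, v - u⟫ := by rw [inner_sub_left]; ring
    _ ≤ ‖g - d‖ * ‖v - u‖ + 0 := add_le_add (real_inner_le_norm _ _) hd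
    _ ≤ R * ‖g - d‖ := by rw [add_zero, mul_comm]; gcongr

/-- The gap `𝒢(x)` of the statement is `frankWolfeGap C (∇f x) x`. -/
noncomputable def frankWolfeGap (C : Set E) (g x : E) : ℝ :=
  sSup ((fun u => ⟪g, x - u⟫) '' C)

theorem frankWolfeGap_le_inner_sub_add {C : Set E} {R : ℝ} {d x v : E} (hx : x ∈ C)
    (hdiam : ∀ u ∈ C, ∀ w ∈ C, ‖u - w‖ ≤ R) (hv : v ∈ C) (hvmin : ∀ s ∈ C, ⟪d, v⟫ ≤ ⟪d, s⟫)
    (g : E) : frankWolfeGap C g x ≤ ⟪g, x - v⟫ + R * ‖g - d‖ := by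
  refine csSup_le ((Set.nonempty_of_mem hx).image _) ?_
  rintro _ ⟨u, hu, rfl⟩
  have hvu := inner_sub_le_mul_norm_sub_of_inner_le (g := g) (hdiam v hv u hu) (hvmin u hu)
  calc ⟪g, x - u⟫ = ⟪g, x - v⟫ + ⟪g, v - u⟫ := by rw [← inner_add_right, sub_add_sub_cancel]
    _ ≤ ⟪g, x - v⟫ + R * ‖g - d‖ := by gcongr

variable [CompleteSpace E]

theorem hasDerivAt_comp_add_smul {f : E → ℝ} {x h : E} {t : ℝ}
    (hf : DifferentiableAt ℝ f (x + t • h)) :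
    HasDerivAt (fun s : ℝ => f (x + s • h)) ⟪gradient f (x + t • h), h⟫ t := by
  have hline : HasDerivAt (fun s : ℝ => x + s • h) h t := by
    simpa using ((hasDerivAt_id t).smul_const h).const_add x
  rw [inner_gradient_left]
  exact hf.hasFDerivAt.comp_hasDerivAt t hline

theorem le_add_inner_gradient_add_sq_of_lipschitz {f : E → ℝ} (hf : Differentiable ℝ f) {L : ℝ}
    (hlip : ∀ u w, ‖gradient f u - gradient f w‖ ≤ L * ‖u - w‖) (x y : E) :
    f y ≤ f x + ⟪gradient f x, y - x⟫ + L / 2 * ‖y - x‖ ^ 2 := by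
  set h := y - x
  have hψ : ∀ t, HasDerivAt (fun s : ℝ => f (x + s • h) - s * ⟪gradient f x, h⟫)
      (⟪gradient f (x + t • h), h⟫ - ⟪gradient f x, h⟫) t := fun t =>
    (hasDerivAt_comp_add_smul (hf _)).sub ((hasDerivAt_id t).mul_const _ |>.congr_deriv (one_mul _))
  have hB : ∀ t, HasDerivAt (fun s : ℝ => f x + L / 2 * s ^ 2 * ‖h‖ ^ 2) (L * t * ‖h‖ ^ 2) t :=
    fun t => ((((hasDerivAt_pow 2 t).const_mul (L / 2)).mul_const (‖h‖ ^ 2)).const_add (f x)).congr_deriv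
      (by simp only [Nat.cast_ofNat, Nat.add_one_sub_one, pow_one]; ring)
  have hslope : ∀ t ∈ Set.Ico (0 : ℝ) 1,
      ⟪gradient f (x + t • h), h⟫ - ⟪gradient f x, h⟫ ≤ L * t * ‖h‖ ^ 2 := by
    rintro t ⟨ht, -⟩
    calc ⟪gradient f (x + t • h), h⟫ - ⟪gradient f x, h⟫
        = ⟪gradient f (x + t • h) - gradient f x, h⟫ := (inner_sub_left ..).symm
      _ ≤ ‖gradient f (x + t • h) - gradient f x‖ * ‖h‖ := real_inner_le_norm _ _
      _ ≤ L * ‖(x + t • h) - x‖ * ‖h‖ := by gcongr; exact hlip _ _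
      _ = L * t * ‖h‖ ^ 2 := by
        rw [add_sub_cancel_left, norm_smul, Real.norm_of_nonneg ht]; ring
  have hfence := image_le_of_deriv_right_le_deriv_boundary
    (fun t _ => (hψ t).continuousAt.continuousWithinAt) (fun t _ => (hψ t).hasDerivWithinAt)
    (by simp) (fun t _ => (hB t).continuousAt.continuousWithinAt)
    (fun t _ => (hB t).hasDerivWithinAt) hslope (Set.right_mem_Icc.mpr zero_le_one)
  simp only [one_smul, one_mul, one_pow, mul_one, h, add_sub_cancel] at hfence
  linarith

end

theorem frank_wolfe_single_step_descent_nonconvex_general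
    (d : ℕ)
    (C : Set (EuclideanSpace ℝ (Fin d)))
    (R : ℝ) (hdiam : ∀ u ∈ C, ∀ w ∈ C, ‖u - w‖ ≤ R)
    (f : EuclideanSpace ℝ (Fin d) → ℝ)
    (hfdiff : Differentiable ℝ f)
    (L : ℝ) (hL : 0 < L)
    (hflip : ∀ u w, ‖gradient f u - gradient f w‖ ≤ L * ‖u - w‖)
    (x : EuclideanSpace ℝ (Fin d)) (hx : x ∈ C)
    (dvec : EuclideanSpace ℝ (Fin d))
    (γ : ℝ) (hγ0 : 0 ≤ γ)
    (v : EuclideanSpace ℝ (Fin d)) (hvC : v ∈ C)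
    (hvmin : ∀ s ∈ C, ⟪dvec, v⟫ ≤ ⟪dvec, s⟫) :
    f ((1 - γ) • x + γ • v) ≤
      f x - γ * sSup ((fun u => ⟪gradient f x, x - u⟫) '' C) +
        γ * R * ‖gradient f x - dvec‖ + L * R ^ 2 * γ ^ 2 / 2 := by
  have hstep : (1 - γ) • x + γ • v - x = γ • (v - x) := by module
  have hdescent := le_add_inner_gradient_add_sq_of_lipschitz hfdiff hflip x ((1 - γ) • x + γ • v)
  rw [hstep, real_inner_smul_right, norm_smul, Real.norm_of_nonneg hγ0, mul_pow] at hdescent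
  have hswap : ⟪gradient f x, v - x⟫ = -⟪gradient f x, x - v⟫ := by rw [← inner_neg_right, neg_sub]
  have hgap := frankWolfeGap_le_inner_sub_add hx hdiam hvC hvmin (gradient f x)
  have hsq : ‖v - x‖ ^ 2 ≤ R ^ 2 := pow_le_pow_left₀ (norm_nonneg _) (hdiam v hvC x hx) 2
  have hγgap := mul_le_mul_of_nonneg_left hgap hγ0
  have hγsq := mul_le_mul_of_nonneg_left hsq (mul_nonneg hL.le (sq_nonneg γ))
  unfold frankWolfeGap at hγgap
  linear_combination hdescent + hγgap + hγsq / 2 + γ * hswap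

theorem frank_wolfe_single_step_descent_nonconvex
    (d : ℕ) (hd : 1 ≤ d)
    (C : Set (EuclideanSpace ℝ (Fin d)))
    (hCne : C.Nonempty) (hCcomp : IsCompact C) (hCconv : Convex ℝ C)
    (R : ℝ) (hR : 0 < R) (hdiam : ∀ u ∈ C, ∀ w ∈ C, ‖u - w‖ ≤ R)
    (f : EuclideanSpace ℝ (Fin d) → ℝ)
    (hfdiff : Differentiable ℝ f)
    (L : ℝ) (hL : 0 < L)
    (hflip : ∀ u w, ‖gradient f u - gradient f w‖ ≤ L * ‖u - w‖)
    (x : EuclideanSpace ℝ (Fin d)) (hx : x ∈ C)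
    (dvec : EuclideanSpace ℝ (Fin d))
    (γ : ℝ) (hγ0 : 0 ≤ γ) (hγ1 : γ ≤ 1)
    (v : EuclideanSpace ℝ (Fin d)) (hvC : v ∈ C)
    (hvmin : ∀ s ∈ C, ⟪dvec, v⟫ ≤ ⟪dvec, s⟫) :
    f ((1 - γ) • x + γ • v) ≤
      f x - γ * sSup ((fun u => ⟪gradient f x, x - u⟫) '' C) +
        γ * R * ‖gradient f x - dvec‖ + L * R ^ 2 * γ ^ 2 / 2 :=
  frank_wolfe_single_step_descent_nonconvex_general d C R hdiam f hfdiff L hL hflip x hx dvec γ hγ0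
    v hvC hvmin
end
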